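/- Let G be a connected block graph of order n with exactly p pendant vertices. Then SW_{n−1}(G) = n² − n − p. -/

import Mathlib

open SimpleGraph Finset
open scoped Classical

/-- The Steiner distance of a vertex set `S` in `G`: the minimum number of edges of a
connected subgraph of `G` whose vertex set contains `S`. -/
noncomputable def steinerDist {V : Type*} (G : SimpleGraph V) (S : Set V) : ℕ :=
  sInf {m | ∃ H : G.Subgraph, H.Connected ∧ S ⊆ H.verts ∧ H.edgeSet.ncard = m}

/-- The Steiner `k`-Wiener index: the sum of Steiner distances over all `k`-element
vertex subsets. -/
noncomputable def steinerWiener {V : Type*} [Fintype V] (G : SimpleGraph V) (k : ℕ) : ℕ :=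
  ∑ S ∈ Finset.powersetCard k (Finset.univ : Finset V), steinerDist G (↑S : Set V)

/-- `v` is a cut vertex of `G`: `G` is connected but deleting `v` disconnects it. -/
def IsCutVertex {V : Type*} (G : SimpleGraph V) (v : V) : Prop :=
  G.Connected ∧ ¬ (G.induce {u | u ≠ v}).Connected

/-- The induced subgraph on `B` is connected and has no cut vertex. -/
def IsBiconnectedSet {V : Type*} (G : SimpleGraph V) (B : Set V) : Prop :=
  (G.induce B).Connected ∧
    ∀ v ∈ B, (B \ {v}).Nonempty → (G.induce (B \ {v})).Connected

/-- `B` is a block of `G`: a maximal set inducing a connected subgraph without cut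
vertex (with at least two vertices). -/
def IsBlock {V : Type*} (G : SimpleGraph V) (B : Set V) : Prop :=
  2 ≤ B.ncard ∧ IsBiconnectedSet G B ∧
    ∀ B' : Set V, B ⊆ B' → 2 ≤ B'.ncard → IsBiconnectedSet G B' → B' = B

/-- A block graph: a connected graph in which every block is a clique. -/
def IsBlockGraph {V : Type*} (G : SimpleGraph V) : Prop :=
  G.Connected ∧ ∀ B : Set V, IsBlock G B → G.IsClique B

/-!
Summing over the missing vertex, `SW_{n-1}(G) = ∑_v d(V ∖ {v})`. A connected subgraph on `k`
vertices has at least `k - 1` edges, with equality for a spanning tree. So if `v` is not a cut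
vertex, a spanning tree of `G - v` shows `d(V ∖ {v}) = n - 2`; if `v` is a cut vertex, every
connected subgraph containing `V ∖ {v}` also contains `v`, and `d(V ∖ {v}) = d(V) = n - 1`.
Hence `SW_{n-1}(G) = n(n - 1) - #{non-cut vertices}` for every connected graph.

In a block graph the non-cut vertices are exactly the pendant ones. Two neighbours `a ≠ b` of a
non-cut vertex `v` are joined by a path in `G - v`; with `v` it spans a cycle, which lies in a
block, a clique, so `a` and `b` are adjacent. Thus the closed neighbourhood of `v` is a clique; it
lies in some block, and it contains every block through `v`, so that block is unique.
-/

theorem Finset.powersetCard_card_sub_one_univ {α : Type*} [Fintype α] [Nonempty α]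
    [DecidableEq α] : powersetCard (Fintype.card α - 1) (univ : Finset α) = univ.image ({·}ᶜ) := by
  ext S
  simp only [mem_powersetCard, subset_univ, true_and, mem_image, mem_univ]
  constructor
  · intro hS
    have hcompl : Sᶜ.card = 1 := by
      have := Fintype.card_pos (α := α)
      rw [card_compl]
      omega
    obtain ⟨a, ha⟩ := card_eq_one.mp hcompl
    exact ⟨a, by rw [← ha, compl_compl]⟩
  · rintro ⟨a, rfl⟩
    rw [card_compl, card_singleton]

namespace SimpleGraph

variable {V : Type*} {G : SimpleGraph V}

theorem Walk.IsPath.notMem_support_takeUntil_or_dropUntil [DecidableEq V] {u v x w : V}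
    {p : G.Walk u v} (hp : p.IsPath) (hx : x ∈ p.support) (hwx : w ≠ x) :
    w ∉ (p.takeUntil x hx).support ∨ w ∉ (p.dropUntil x hx).support := by
  by_contra! ⟨htake, hdrop⟩
  have hnodup : ((p.takeUntil x hx).append (p.dropUntil x hx)).support.Nodup := by
    rw [p.take_spec hx]
    exact hp.support_nodup
  rw [Walk.support_append] at hnodup
  rw [← Walk.cons_tail_support, List.mem_cons] at hdrop
  exact List.disjoint_of_nodup_append hnodup htake (hdrop.resolve_left hwx)

theorem connected_induce_insert_support {v a b : V} (p : G.Walk a b) (hva : G.Adj v a) :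
    (G.induce (insert v {z | z ∈ p.support})).Connected := by
  rw [← Set.singleton_union]
  exact connected_induce_union Preconnected.of_subsingleton
    p.connected_induce_support.preconnected (Set.mem_singleton v) p.start_mem_support hva

theorem IsClique.induce_connected {S : Set V} (hS : G.IsClique S) (hne : S.Nonempty) :
    (G.induce S).Connected := by
  have := hne.to_subtype
  rw [induce_eq_top.mpr hS]
  exact connected_top

theorem IsClique.isBiconnectedSet {S : Set V} (hS : G.IsClique S) (hne : S.Nonempty) :
    IsBiconnectedSet G S :=
  ⟨hS.induce_connected hne, fun _ _ h => (hS.subset Set.sdiff_subset).induce_connected h⟩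

theorem Subgraph.Connected.ncard_verts_le_ncard_edgeSet_add_one [Finite V] {H : G.Subgraph}
    (hH : H.Connected) : H.verts.ncard ≤ H.edgeSet.ncard + 1 := by
  have := hH.coe.card_vert_le_card_edgeSet_add_one
  rwa [Nat.card_coe_set_eq, Nat.card_coe_set_eq, ← Set.ncard_image_of_injective _
    (Sym2.map.injective Subtype.val_injective), H.image_coe_edgeSet_coe] at this

theorem Subgraph.Connected.exists_connected_verts_eq_ncard_edgeSet_add_one [Finite V]
    {H : G.Subgraph} (hH : H.Connected) :
    ∃ K : G.Subgraph, K.Connected ∧ K.verts = H.verts ∧ K.edgeSet.ncard + 1 = H.verts.ncard := by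
  obtain ⟨T, hTH, hT⟩ := hH.coe.exists_isTree_le
  refine ⟨Subgraph.coeSubgraph (toSubgraph T hTH), (hT.connected.toSubgraph hTH).coeSubgraph _,
    by simp, ?_⟩
  rw [Subgraph.edgeSet_map, Set.ncard_image_of_injective _ (Sym2.map.injective H.hom_injective),
    ← Nat.card_coe_set_eq, ← Nat.card_coe_set_eq]
  exact (isTree_iff_connected_and_card.mp hT).2

end SimpleGraph

section

variable {V : Type*} {G : SimpleGraph V}

theorem steinerDist_le {S : Set V} {H : G.Subgraph} (hH : H.Connected) (hSH : S ⊆ H.verts) :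
    steinerDist G S ≤ H.edgeSet.ncard :=
  Nat.sInf_le ⟨H, hH, hSH, rfl⟩

theorem ncard_le_steinerDist_add_one [Finite V] {S : Set V}
    (h : ∃ H : G.Subgraph, H.Connected ∧ S ⊆ H.verts) : S.ncard ≤ steinerDist G S + 1 := by
  obtain ⟨H, hH, hSH⟩ := h
  have hne : {m | ∃ H : G.Subgraph, H.Connected ∧ S ⊆ H.verts ∧ H.edgeSet.ncard = m}.Nonempty :=
    ⟨_, H, hH, hSH, rfl⟩
  obtain ⟨K, hK, hSK, hKS⟩ : ∃ K : G.Subgraph,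
      K.Connected ∧ S ⊆ K.verts ∧ K.edgeSet.ncard = steinerDist G S := Nat.sInf_mem hne
  calc S.ncard ≤ K.verts.ncard := Set.ncard_le_ncard hSK
    _ ≤ K.edgeSet.ncard + 1 := hK.ncard_verts_le_ncard_edgeSet_add_one
    _ = steinerDist G S + 1 := by rw [hKS]

theorem steinerDist_add_one_eq_ncard [Finite V] {S : Set V} (hS : (G.induce S).Connected) :
    steinerDist G S + 1 = S.ncard := by
  obtain ⟨K, hK, hKS, hKe⟩ :=
    (connected_induce_iff.mp hS).exists_connected_verts_eq_ncard_edgeSet_add_one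
  rw [Subgraph.induce_verts] at hKS hKe
  have hle := steinerDist_le hK hKS.ge
  have hge := ncard_le_steinerDist_add_one ⟨K, hK, hKS.ge⟩
  omega

theorem steinerWiener_card_sub_one [Fintype V] [Nonempty V] :
    steinerWiener G (Fintype.card V - 1) = ∑ v, steinerDist G {v}ᶜ := by
  rw [steinerWiener, powersetCard_card_sub_one_univ,
    sum_image fun a _ b _ h => singleton_injective (compl_injective h)]
  simp

theorem IsCutVertex.mem_verts {v : V} (hv : IsCutVertex G v) {H : G.Subgraph}
    (hH : H.Connected) (hvH : {v}ᶜ ⊆ H.verts) : v ∈ H.verts := by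
  by_contra hvH'
  have hverts : H.verts = {u | u ≠ v} :=
    Set.Subset.antisymm (fun u hu huv => hvH' (huv ▸ hu)) hvH
  exact hv.2 (hverts ▸ hH.induce_verts)

theorem steinerDist_compl_singleton_of_isCutVertex [Finite V] {v : V} (hv : IsCutVertex G v) :
    steinerDist G {v}ᶜ + 1 = Nat.card V := by
  have hsame : steinerDist G {v}ᶜ = steinerDist G Set.univ := by
    refine congrArg sInf (Set.ext fun m => exists_congr fun H => and_congr_right fun hH => ?_)
    refine and_congr_left fun _ => ⟨fun hvH u _ => ?_, (Set.subset_univ _).trans⟩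
    obtain rfl | hu := eq_or_ne u v
    exacts [hv.mem_verts hH hvH, hvH hu]
  rw [hsame, steinerDist_add_one_eq_ncard ((induceUnivIso G).connected_iff.mpr hv.1),
    Set.ncard_univ]

theorem connected_induce_compl_singleton_of_not_isCutVertex (hG : G.Connected) {v : V}
    (hv : ¬ IsCutVertex G v) : (G.induce {v}ᶜ).Connected := by
  by_contra h
  exact hv ⟨hG, h⟩

theorem steinerDist_compl_singleton_of_not_isCutVertex [Finite V] (hG : G.Connected) {v : V}
    (hv : ¬ IsCutVertex G v) : steinerDist G {v}ᶜ + 2 = Nat.card V := by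
  rw [← Set.ncard_compl_add_ncard {v}, Set.ncard_singleton, ← steinerDist_add_one_eq_ncard
    (connected_induce_compl_singleton_of_not_isCutVertex hG hv)]

theorem steinerWiener_card_sub_one_add_ncard_not_isCutVertex [Fintype V] (hG : G.Connected) :
    steinerWiener G (Fintype.card V - 1) + {v | ¬ IsCutVertex G v}.ncard
      = Fintype.card V ^ 2 - Fintype.card V := by
  have : Nonempty V := hG.nonempty
  have hterm : ∀ v, steinerDist G {v}ᶜ + (if ¬ IsCutVertex G v then 1 else 0)
      = Fintype.card V - 1 := by
    intro v
    rw [← Nat.card_eq_fintype_card]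
    split_ifs with hv
    · have := steinerDist_compl_singleton_of_isCutVertex hv
      omega
    · have := steinerDist_compl_singleton_of_not_isCutVertex hG hv
      omega
  rw [steinerWiener_card_sub_one, Set.ncard_eq_toFinset_card', Set.toFinset_ofPred, card_filter,
    ← sum_add_distrib, sum_congr rfl fun v _ => hterm v, sum_const, card_univ, smul_eq_mul,
    Nat.mul_sub_one, sq]

theorem exists_isBlock_superset [Finite V] {S : Set V} (hS : IsBiconnectedSet G S)
    (h2 : 2 ≤ S.ncard) : ∃ B, IsBlock G B ∧ S ⊆ B := by
  obtain ⟨B, hSB, ⟨hB2, hB⟩, hmax⟩ :=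
    Finite.exists_le_maximal (p := fun T : Set V => 2 ≤ T.ncard ∧ IsBiconnectedSet G T) ⟨h2, hS⟩
  exact ⟨B, ⟨hB2, hB, fun B' hBB' h2' hB' => (hmax ⟨h2', hB'⟩ hBB').antisymm hBB'⟩, hSB⟩

theorem isBiconnectedSet_insert_support {v a b : V} {p : G.Walk a b}
    (hp : p.IsPath) (hvp : v ∉ p.support) (hva : G.Adj v a) (hvb : G.Adj v b) :
    IsBiconnectedSet G (insert v {z | z ∈ p.support}) := by
  refine ⟨connected_induce_insert_support p hva, fun w _ _ => ?_⟩
  obtain rfl | hwv := eq_or_ne w v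
  · rw [Set.insert_sdiff_self_of_notMem (s := {z | z ∈ p.support}) hvp]
    exact p.connected_induce_support
  have hvW : v ∈ insert v {z | z ∈ p.support} \ {w} := ⟨Set.mem_insert v _, hwv.symm⟩
  refine induce_connected_of_patches v hvW fun {x} hx => ?_
  obtain ⟨rfl | hxp, hxw⟩ := hx
  · exact ⟨{x}, by simpa using hvW, rfl, rfl, Reachable.refl _⟩
  have patch : ∀ {c : V} (q : G.Walk c x), G.Adj v c → w ∉ q.support →
      q.support ⊆ p.support → ∃ s ⊆ insert v {z | z ∈ p.support} \ {w}, ∃ (hvs : v ∈ s)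
        (hxs : x ∈ s), (G.induce s).Reachable ⟨v, hvs⟩ ⟨x, hxs⟩ := by
    intro c q hvc hwq hqp
    refine ⟨_, ?_, Set.mem_insert v _, Set.mem_insert_of_mem v q.end_mem_support,
      (connected_induce_insert_support q hvc).preconnected _ _⟩
    rintro z (rfl | hz)
    exacts [hvW, ⟨Set.mem_insert_of_mem _ (hqp hz), fun hzw => hwq (hzw ▸ hz)⟩]
  rcases hp.notMem_support_takeUntil_or_dropUntil hxp (Ne.symm hxw) with htake | hdrop
  · exact patch _ hva htake (p.support_takeUntil_subset_support hxp)
  · refine patch (p.dropUntil x hxp).reverse hvb (by simpa using hdrop) ?_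
    rw [Walk.support_reverse]
    exact fun z hz => p.support_dropUntil_subset_support hxp (List.mem_reverse.mp hz)

theorem IsBlockGraph.adj_of_not_isCutVertex [Finite V] (hbg : IsBlockGraph G) {v a b : V}
    (hv : ¬ IsCutVertex G v) (hva : G.Adj v a) (hvb : G.Adj v b) (hab : a ≠ b) : G.Adj a b := by
  obtain ⟨q⟩ := (connected_induce_compl_singleton_of_not_isCutVertex hbg.1 hv).preconnected
    ⟨a, hva.ne'⟩ ⟨b, hvb.ne'⟩
  set p := (q.map (Embedding.induce _).toHom).bypass
  have hvp : v ∉ p.support := fun h => by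
    obtain ⟨z, _, hz⟩ := List.mem_map.mp (q.support_map _ ▸ Walk.support_bypass_subset_support _ h)
    exact z.2 hz
  have hap : a ∈ insert v {z | z ∈ p.support} := Set.mem_insert_of_mem v p.start_mem_support
  obtain ⟨B, hB, hpB⟩ := exists_isBlock_superset
    (isBiconnectedSet_insert_support (Walk.bypass_isPath _) hvp hva hvb)
    ((Set.one_lt_ncard_iff (Set.toFinite _)).mpr ⟨v, a, Set.mem_insert v _, hap, hva.ne⟩)
  exact hbg.2 B hB (hpB hap) (hpB (Set.mem_insert_of_mem v p.end_mem_support)) hab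

theorem IsBlockGraph.existsUnique_isBlock_of_not_isCutVertex [Finite V] (hbg : IsBlockGraph G)
    {v : V} (hv : ¬ IsCutVertex G v) : ∃! B, IsBlock G B ∧ v ∈ B := by
  obtain ⟨⟨u, hu⟩⟩ := (connected_induce_compl_singleton_of_not_isCutVertex hbg.1 hv).nonempty
  have : Nontrivial V := ⟨⟨u, v, hu⟩⟩
  obtain ⟨a, hva⟩ := hbg.1.preconnected.exists_adj_of_nontrivial v
  have hC : G.IsClique (insert v (G.neighborSet v)) :=
    isClique_insert.mpr ⟨fun _ hx _ hy hxy => hbg.adj_of_not_isCutVertex hv hx hy hxy,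
      fun _ hx _ => hx⟩
  obtain ⟨B₀, hB₀, hCB₀⟩ := exists_isBlock_superset (hC.isBiconnectedSet ⟨v, Set.mem_insert v _⟩)
    ((Set.one_lt_ncard_iff (Set.toFinite _)).mpr
      ⟨v, a, Set.mem_insert v _, Set.mem_insert_of_mem v hva, hva.ne⟩)
  refine ⟨B₀, ⟨hB₀, hCB₀ (Set.mem_insert v _)⟩, fun B ⟨hB, hvB⟩ => ?_⟩
  have hBC : B ⊆ insert v (G.neighborSet v) := fun x hx =>
    (eq_or_ne x v).elim Or.inl fun hxv => Or.inr (hbg.2 B hB hvB hx hxv.symm)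
  exact (hB.2.2 B₀ (hBC.trans hCB₀) hB₀.1 hB₀.2.1).symm

end

/-- For a connected block graph of order n with p pendant vertices (vertices lying in
exactly one block and not cut vertices): SW_{n-1}(G) = n^2 - n - p, stated additively. -/
theorem stmt14 {V : Type*} [Fintype V] (G : SimpleGraph V) (hbg : IsBlockGraph G) :
    steinerWiener G (Fintype.card V - 1) +
        {v : V | (∃! B : Set V, IsBlock G B ∧ v ∈ B) ∧ ¬ IsCutVertex G v}.ncard
      = Fintype.card V ^ 2 - Fintype.card V := by
  have hpendant : {v : V | (∃! B : Set V, IsBlock G B ∧ v ∈ B) ∧ ¬ IsCutVertex G v}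
      = {v | ¬ IsCutVertex G v} :=
    Set.ext fun v => ⟨And.right, fun hv => ⟨hbg.existsUnique_isBlock_of_not_isCutVertex hv, hv⟩⟩
  rw [hpendant]
  exact steinerWiener_card_sub_one_add_ncard_not_isCutVertex hbg.1
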